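/- Let f : ℝ → ℝ be measurable with f(x) > 0 for all x ≥ c and f nonincreasing on [c, ∞), and f ≥ 0 on ℝ. Then for every fixed t > 0, liminf_{x→∞} (f∗Θ_t(x) / f(x)) ≥ 1/2. -/

import Mathlib

open MeasureTheory Real Set Filter
open scoped ENNReal

/-- The Gauss–Weierstrass heat kernel on the real line. -/
noncomputable def heatKernel (t x : ℝ) : ℝ :=
  Real.exp (-x ^ 2 / (4 * t)) / (2 * Real.sqrt (Real.pi * t))

lemma heatKernel_nonneg (t x : ℝ) : 0 ≤ heatKernel t x := by
  unfold heatKernel; positivity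

lemma heatKernel_eq (t : ℝ) (ht : 0 < t) (x : ℝ) :
    heatKernel t x = Real.exp (-(1 / (4 * t)) * x ^ 2) * (1 / (2 * Real.sqrt (Real.pi * t))) := by
  unfold heatKernel
  rw [div_eq_mul_one_div]
  congr 1
  congr 1
  field_simp

lemma heatKernel_measurable (t : ℝ) : Measurable (heatKernel t) := by
  unfold heatKernel; fun_prop

lemma heatKernel_integrableOn (t : ℝ) (ht : 0 < t) : IntegrableOn (heatKernel t) (Ioi 0) := by
  have : Integrable (heatKernel t) := by
    have h := (integrable_exp_neg_mul_sq (b := 1 / (4 * t)) (by positivity)).mul_const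
      (1 / (2 * Real.sqrt (Real.pi * t)))
    refine h.congr (ae_of_all _ fun x => ?_)
    rw [heatKernel_eq t ht]
  exact this.integrableOn

lemma integral_heatKernel_Ioi (t : ℝ) (ht : 0 < t) :
    ∫ y in Ioi (0 : ℝ), heatKernel t y = 1 / 2 := by
  have hπt : 0 < Real.pi * t := by positivity
  simp_rw [heatKernel_eq t ht]
  rw [integral_mul_const, integral_gaussian_Ioi]
  have h1 : Real.pi / (1 / (4 * t)) = 4 * (Real.pi * t) := by field_simp
  rw [h1, show (4 : ℝ) * (Real.pi * t) = 2 ^ 2 * (Real.pi * t) by ring,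
    Real.sqrt_mul (by positivity), Real.sqrt_sq (by norm_num : (0:ℝ) ≤ 2)]
  have h2 : Real.sqrt (Real.pi * t) ≠ 0 := by positivity
  field_simp


theorem liminf_convolution_heatKernel_div (f : ℝ → ℝ) (hf : Measurable f)
    (hf0 : ∀ x, 0 ≤ f x) (c : ℝ) (hpos : ∀ x, c ≤ x → 0 < f x)
    (hmono : AntitoneOn f (Ici c)) (t : ℝ) (ht : 0 < t) :
    (1 / 2 : ℝ≥0∞) ≤
      Filter.liminf
        (fun x : ℝ =>
          (∫⁻ y : ℝ, ENNReal.ofReal (f (x - y) * heatKernel t y)) /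
            ENNReal.ofReal (f x))
        Filter.atTop := by
  set g : ℕ → ℝ≥0∞ := fun n => ∫⁻ y in Icc (0 : ℝ) n, ENNReal.ofReal (heatKernel t y) with hg
  -- Step 1: each g n is a lower bound for the liminf
  have key : ∀ n : ℕ, g n ≤ Filter.liminf
      (fun x : ℝ =>
        (∫⁻ y : ℝ, ENNReal.ofReal (f (x - y) * heatKernel t y)) /
          ENNReal.ofReal (f x)) Filter.atTop := by
    intro n
    apply Filter.le_liminf_of_le (by isBoundedDefault)
    filter_upwards [eventually_ge_atTop (c + n)] with x hx
    have hn0 : (0 : ℝ) ≤ n := Nat.cast_nonneg n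
    have hxc : c ≤ x := le_trans (by linarith) hx
    have hfx : 0 < f x := hpos x hxc
    rw [ENNReal.le_div_iff_mul_le
      (Or.inl (by simpa [ENNReal.ofReal_pos] using hfx)) (Or.inl ENNReal.ofReal_ne_top)]
    have step1 : g n * ENNReal.ofReal (f x)
        = ∫⁻ y in Icc (0 : ℝ) n, ENNReal.ofReal (f x * heatKernel t y) := by
      rw [hg, mul_comm, ← lintegral_const_mul _ ((heatKernel_measurable t).ennreal_ofReal)]
      congr 1
      ext y
      rw [ENNReal.ofReal_mul hfx.le]
    rw [step1]
    refine le_trans ?_ (setLIntegral_le_lintegral (Icc (0:ℝ) n) _)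
    refine setLIntegral_mono (hf.comp (measurable_const.sub measurable_id)
      |>.mul (heatKernel_measurable t)).ennreal_ofReal fun y hy => ?_
    rcases hy with ⟨hy0, hyn⟩
    have hxy : c ≤ x - y := by linarith
    have hle : f x ≤ f (x - y) :=
      hmono hxy hxc (by linarith)
    exact ENNReal.ofReal_le_ofReal
      (mul_le_mul_of_nonneg_right hle (heatKernel_nonneg t y))
  -- Step 2: the supremum of g n is at least 1/2
  have hsup : (1 / 2 : ℝ≥0∞) ≤ ⨆ n, g n := by
    have hint : IntegrableOn (heatKernel t) (Ioi 0) := heatKernel_integrableOn t ht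
    have htend : Tendsto (fun n : ℕ => ∫ y in (0:ℝ)..(n:ℝ), heatKernel t y) atTop
        (nhds (∫ y in Ioi (0:ℝ), heatKernel t y)) :=
      intervalIntegral_tendsto_integral_Ioi 0 hint tendsto_natCast_atTop_atTop
    rw [integral_heatKernel_Ioi t ht] at htend
    have hgn : ∀ n : ℕ, g n = ENNReal.ofReal (∫ y in (0:ℝ)..(n:ℝ), heatKernel t y) := by
      intro n
      rw [hg, intervalIntegral.integral_of_le (Nat.cast_nonneg n),
        ofReal_integral_eq_lintegral_ofReal
          ((hint.mono Ioc_subset_Ioi_self le_rfl))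
          (ae_of_all _ fun y => heatKernel_nonneg t y)]
      exact (setLIntegral_congr Ioc_ae_eq_Icc).symm
    have htend2 : Tendsto g atTop (nhds (ENNReal.ofReal (1 / 2))) := by
      rw [funext hgn]
      exact (ENNReal.continuous_ofReal.tendsto _).comp htend
    have : ENNReal.ofReal (1 / 2) ≤ ⨆ n, g n :=
      le_of_tendsto htend2 (Eventually.of_forall fun n => le_iSup g n)
    refine le_trans (le_of_eq ?_) this
    rw [ENNReal.ofReal_div_of_pos (by norm_num)]
    norm_num
  exact le_trans hsup (iSup_le key)
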